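/- arXiv:2412.20081 — 6 statements merged into one kernel-verified Lean document; each statement's English description precedes it below -/
import Mathlib

section
/- If 4 divides n, the half-antipodal map ρ_HA, defined by ρ_HA(a) = a + n/2 if a is even and ρ_HA(a) = a if a is odd, is a well-defined good involution of the dihedral quandle R_n. -/
/-- Dihedral quandle operation on `ZMod n`: `a * b = 2b - a`. -/
def dOp (n : ℕ) (a b : ZMod n) : ZMod n := 2 * b - a

/-- `ρ` is a good involution of the quandle with operation `op`. -/
def IsGoodInvolution {Q : Type*} (op : Q → Q → Q) (ρ : Q → Q) : Prop :=
  Function.Involutive ρ ∧ (∀ a b, ρ (op a b) = op (ρ a) b) ∧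
    (∀ a b, op (op a (ρ b)) b = a)

/-- The half-antipodal map on `ZMod n`: antipodal on even elements, identity on odd ones. -/
def halfAntipodal (n : ℕ) (a : ZMod n) : ZMod n :=
  if Even a.val then a + ((n / 2 : ℕ) : ZMod n) else a

/-- If `4 ∣ n`, the half-antipodal map is a good involution of `R_n`. -/
theorem stmt4 (n : ℕ) (hn : 4 ∣ n) :
    IsGoodInvolution (dOp n) (halfAntipodal n) := by
  rcases Nat.eq_zero_or_pos n with rfl | hpos
  · have h0 : halfAntipodal 0 = id := by
      funext a
      simp [halfAntipodal]
    rw [h0]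
    refine ⟨fun a => rfl, fun a b => rfl, fun a b => ?_⟩
    simp only [dOp, id_eq]; ring
  · have : NeZero n := ⟨hpos.ne'⟩
    have h2 : (2:ℕ) ∣ n := dvd_trans (by norm_num) hn
    have hh2 : (2:ℕ) ∣ n / 2 := by
      obtain ⟨k, rfl⟩ := hn
      omega
    set f := ZMod.castHom h2 (ZMod 2) with hfdef
    have hfv : ∀ a : ZMod n, f a = (a.val : ZMod 2) := fun a => by
      rw [hfdef, ZMod.castHom_apply, ZMod.natCast_val]
    have hev : ∀ a : ZMod n, Even a.val ↔ f a = 0 := fun a => by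
      rw [hfv, ZMod.natCast_eq_zero_iff, even_iff_two_dvd]
    have hhz : (((n / 2 : ℕ)) : ZMod 2) = 0 := by
      rwa [ZMod.natCast_eq_zero_iff]
    have hfh : f ((n / 2 : ℕ) : ZMod n) = 0 := by
      rw [hfdef, map_natCast, hhz]
    have hadd : ∀ a : ZMod n, Even (a + ((n / 2 : ℕ) : ZMod n)).val ↔ Even a.val := fun a => by
      rw [hev, hev, map_add, hfh, add_zero]
    have htwo : ((n / 2 : ℕ) : ZMod n) + ((n / 2 : ℕ) : ZMod n) = 0 := by
      rw [← Nat.cast_add, ← two_mul, Nat.two_mul_div_two_of_even (even_iff_two_dvd.mpr h2)]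
      exact ZMod.natCast_self n
    have hop : ∀ a b : ZMod n, Even (dOp n a b).val ↔ Even a.val := fun a b => by
      rw [hev, hev]
      show f (2 * b - a) = 0 ↔ f a = 0
      rw [map_sub, map_mul]
      have hf2 : f (2 : ZMod n) = 0 := by
        rw [show (2:ZMod n) = ((2:ℕ):ZMod n) by norm_cast, map_natCast]; rfl
      rw [hf2, zero_mul, zero_sub, neg_eq_zero]
    refine ⟨fun a => ?_, fun a b => ?_, fun a b => ?_⟩
    · unfold halfAntipodal
      by_cases h : Even a.val
      · rw [if_pos h, if_pos ((hadd a).mpr h), add_assoc, htwo, add_zero]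
      · rw [if_neg h, if_neg h]
    · unfold halfAntipodal
      by_cases h : Even a.val
      · rw [if_pos ((hop a b).mpr h), if_pos h]
        show 2 * b - a + _ = 2 * b - (a + _)
        have : ((n / 2 : ℕ) : ZMod n) = -((n / 2 : ℕ) : ZMod n) := by
          rw [eq_neg_iff_add_eq_zero, htwo]
        linear_combination htwo
      · rw [if_neg ((hop a b).not.mpr h), if_neg h]
    · unfold halfAntipodal
      by_cases h : Even b.val
      · rw [if_pos h]
        show 2 * b - (2 * (b + _) - a) = a
        linear_combination -htwo
      · rw [if_neg h]
        show 2 * b - (2 * b - a) = a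
        ring
end

section
/- If n is odd, the only good involution of the dihedral quandle R_n is the identity map. -/
/-- `(a * c) * b = a + 2 (b - c)`, and `2` is invertible modulo an odd `n`. -/
theorem dOp_dOp_eq_self_iff {n : ℕ} (hn : Odd n) {a b c : ZMod n} :
    dOp n (dOp n a c) b = a ↔ c = b := by
  have hsum : dOp n (dOp n a c) b = a + ((b - c) + (b - c)) := by
    unfold dOp; ring
  rw [hsum, add_eq_left, ZMod.add_self_eq_zero_iff_eq_zero hn, sub_eq_zero, eq_comm]

/-- For odd `n`, the only good involution of `R_n` is the identity. -/
theorem stmt5 (n : ℕ) (hn : Odd n) (ρ : ZMod n → ZMod n)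
    (hρ : IsGoodInvolution (dOp n) ρ) : ρ = id := by
  funext b
  exact (dOp_dOp_eq_self_iff hn).mp (hρ.2.2 0 b)
end

section
/- If n ≡ 2 (mod 4), every good involution of the dihedral quandle R_n is either the identity map or the antipodal map a ↦ a + n/2. -/
/-- If `n ≡ 2 (mod 4)`, every good involution of `R_n` is the identity
or the antipodal map `a ↦ a + n/2`. -/
theorem stmt6 (n : ℕ) (hn : n % 4 = 2) (ρ : ZMod n → ZMod n)
    (hρ : IsGoodInvolution (dOp n) ρ) :
    ρ = id ∨ ρ = fun a => a + ((n / 2 : ℕ) : ZMod n) := by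
  obtain ⟨hinv, hcomm, hcanc⟩ := hρ
  haveI : NeZero n := ⟨by omega⟩
  obtain ⟨k, hk⟩ : ∃ k, n = 4 * k + 2 := ⟨n / 4, by omega⟩
  set m : ZMod n := ((n / 2 : ℕ) : ZMod n) with hm
  -- basic facts
  have hmval : n / 2 = 2 * k + 1 := by omega
  have h2m : 2 * m = 0 := by
    have e : ((2 * (n / 2) : ℕ) : ZMod n) = ((n : ℕ) : ZMod n) := by congr 1; omega
    push_cast at e
    rw [hm, e, ZMod.natCast_self]
  have hmne : m ≠ 0 := by
    rw [hm, Ne, ZMod.natCast_eq_zero_iff]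
    intro h
    have := Nat.le_of_dvd (by omega) h
    omega
  have hnegm : -m = m := by linear_combination -h2m
  -- from hcomm: ρ (2b - a) = 2b - ρ a
  have hc : ∀ a b : ZMod n, ρ (2 * b - a) = 2 * b - ρ a := fun a b => hcomm a b
  -- 2 * ρ b = 2 * b
  have h2 : ∀ b : ZMod n, 2 * ρ b = 2 * b := by
    intro b
    have := hcanc 0 b
    simp only [dOp] at this
    linear_combination -this
  -- every 2-torsion element is 0 or m
  have key : ∀ x : ZMod n, 2 * x = 0 → x = 0 ∨ x = m := by
    intro x hx
    have hxv : x = ((x.val : ℕ) : ZMod n) := (ZMod.natCast_zmod_val x).symm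
    have hvlt : x.val < n := ZMod.val_lt x
    have h0 : ((2 * x.val : ℕ) : ZMod n) = 0 := by push_cast; rw [← hxv]; exact hx
    rw [ZMod.natCast_eq_zero_iff] at h0
    obtain ⟨j, hj⟩ := h0
    have hvlt' : x.val < 4 * k + 2 := by omega
    have h' : 2 * x.val = 2 * ((2 * k + 1) * j) := by rw [hj, hk]; ring
    have hj2 : x.val = (2 * k + 1) * j := by omega
    have hjle : j ≤ 1 := by
      by_contra hcon
      push_neg at hcon
      have := Nat.mul_le_mul_left (2 * k + 1) hcon
      omega
    interval_cases j
    · left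
      simp only [Nat.mul_zero] at hj2
      rw [hxv, hj2]
      simp
    · right
      simp only [Nat.mul_one] at hj2
      rw [hxv, hj2, hm, hmval]
  -- decomposition: each a is 2c or 2c+1
  have hdec : ∀ a : ZMod n, (∃ c : ZMod n, a = 2 * c) ∨ (∃ c : ZMod n, a = 2 * c + 1) := by
    intro a
    have hxv : a = ((a.val : ℕ) : ZMod n) := (ZMod.natCast_zmod_val a).symm
    rcases Nat.even_or_odd a.val with ⟨c, hc'⟩ | ⟨c, hc'⟩
    · left; exact ⟨(c : ZMod n), by rw [hxv, hc']; push_cast; ring⟩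
    · right; exact ⟨(c : ZMod n), by rw [hxv, hc']; push_cast; ring⟩
  -- values on even elements determined by ρ 0, on odd by ρ 1
  have heven : ∀ c : ZMod n, ρ (2 * c) = 2 * c - ρ 0 := by
    intro c; have := hc 0 c; simpa using this
  have hodd : ∀ c : ZMod n, ρ (2 * c + 1) = 2 * c + 2 - ρ 1 := by
    intro c; have := hc 1 (c + 1); rw [show 2 * (c + 1) - 1 = 2 * c + 1 by ring] at this
    rw [this]; ring
  have h0m : ρ 0 = 0 ∨ ρ 0 = m := by
    have := key (ρ 0 - 0) (by have := h2 0; linear_combination this)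
    simpa using this
  have h1m : ρ 1 = 1 ∨ ρ 1 = 1 + m := by
    have := key (ρ 1 - 1) (by have := h2 1; linear_combination this)
    rcases this with h | h
    · left; linear_combination h
    · right; linear_combination h
  -- m is odd: m = 2*k + 1
  have hmodd : m = 2 * (k : ZMod n) + 1 := by
    rw [hm, hmval]; push_cast; ring
  rcases h0m with h0 | h0 <;> rcases h1m with h1 | h1
  · left
    funext a
    simp only [id_eq]
    rcases hdec a with ⟨c, rfl⟩ | ⟨c, rfl⟩
    · rw [heven, h0]; ring
    · rw [hodd, h1]; ring
  · -- ρ 0 = 0, ρ 1 = 1 + m : contradiction via ρ (1 + m) = 1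
    exfalso
    have hρ1m : ρ (1 + m) = 1 := by
      have := hinv 1; rwa [h1] at this
    have heq2 : ρ (1 + m) = 1 + m := by
      have heq : (1 : ZMod n) + m = 2 * ((k : ZMod n) + 1) := by rw [hmodd]; ring
      rw [heq, heven, h0, ← heq]; ring
    rw [hρ1m] at heq2
    exact hmne (by linear_combination -heq2)
  · -- ρ 0 = m, ρ 1 = 1 : contradiction via ρ m = 0
    exfalso
    have hρm : ρ m = 0 := by
      have := hinv 0; rwa [h0] at this
    have heq2 : ρ m = m := by
      rw [hmodd, hodd, h1]; ring
    rw [hρm] at heq2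
    exact hmne heq2.symm
  · right
    funext a
    show ρ a = a + m
    rcases hdec a with ⟨c, rfl⟩ | ⟨c, rfl⟩
    · rw [heven, h0]; linear_combination -h2m
    · rw [hodd, h1]; linear_combination -h2m
end

section
/- If n ≡ 0 (mod 4), every good involution of the dihedral quandle R_n is one of: the identity, the antipodal map ρ_A(a) = a + n/2, the half-antipodal map ρ_HA (antipodal on evens, identity on odds), or the half-antipodal map ρ'_HA (identity on evens, antipodal on odds). -/
/-- The antipodal map `a ↦ a + n/2` on `ZMod n`. -/
def antipodal (n : ℕ) (a : ZMod n) : ZMod n := a + ((n / 2 : ℕ) : ZMod n)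

/-- Half-antipodal map of the other type: identity on even, antipodal on odd. -/
def halfAntipodal' (n : ℕ) (a : ZMod n) : ZMod n :=
  if Even a.val then a else a + ((n / 2 : ℕ) : ZMod n)

/-- If `n ≡ 0 (mod 4)`, every good involution of `R_n` is the identity, the
antipodal map, or one of the two half-antipodal maps. -/
theorem stmt7 (n : ℕ) (hn : n % 4 = 0) (ρ : ZMod n → ZMod n)
    (hρ : IsGoodInvolution (dOp n) ρ) :
    ρ = id ∨ ρ = antipodal n ∨ ρ = halfAntipodal n ∨ ρ = halfAntipodal' n := by
  obtain ⟨hinv, hcomm, hop⟩ := hρ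
  have key : ∀ b, 2 * ρ b = 2 * b := by
    intro b
    have h := hop 0 b
    simp only [dOp] at h
    linear_combination -h
  rcases Nat.eq_zero_or_pos n with rfl | hpos
  · left
    funext b
    have h : (2 : ℤ) * (show ℤ from ρ b) = 2 * (show ℤ from b) := key b
    have h2 : (show ℤ from ρ b) = (show ℤ from b) := by omega
    exact h2
  haveI : NeZero n := ⟨hpos.ne'⟩
  set m : ZMod n := ((n / 2 : ℕ) : ZMod n) with hm
  have hne : 2 * (n / 2) = n := Nat.two_mul_div_two_of_even (Nat.even_iff.mpr (by omega))
  have hm2 : 2 * m = 0 := by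
    rw [hm]
    have : ((2 * (n / 2) : ℕ) : ZMod n) = ((n : ℕ) : ZMod n) := by rw [hne]
    push_cast at this
    rw [this, ZMod.natCast_self]
  -- every element with 2x = 0 is 0 or m
  have hself : ∀ y : ZMod n, ((y.val : ℕ) : ZMod n) = y := fun y => by
    rw [ZMod.natCast_val, ZMod.cast_id]
  have lemA : ∀ x : ZMod n, 2 * x = 0 → x = 0 ∨ x = m := by
    intro x hx
    have hcast : ((2 * x.val : ℕ) : ZMod n) = 0 := by
      push_cast
      rw [ZMod.natCast_val, ZMod.cast_id]
      exact hx
    have hdvd : n ∣ 2 * x.val := (ZMod.natCast_eq_zero_iff _ _).mp hcast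
    have hlt : x.val < n := ZMod.val_lt x
    obtain ⟨c, hc⟩ := hdvd
    have hc2 : c < 2 := by nlinarith
    have hx0 : x.val = 0 ∨ 2 * x.val = n := by
      interval_cases c <;> omega
    rcases hx0 with h | h
    · left
      exact (ZMod.val_eq_zero x).mp h
    · right
      have : x.val = n / 2 := by omega
      rw [← hself x, this, hm]
  have hρval : ∀ b, ρ b = b ∨ ρ b = b + m := by
    intro b
    rcases lemA (ρ b - b) (by linear_combination key b) with h | h
    · left; linear_combination h
    · right; linear_combination h
  -- values on even/odd elements
  have h2b : ∀ b : ZMod n, ρ (2 * b) = 2 * b - ρ 0 := by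
    intro b
    have h := hcomm 0 b
    simp only [dOp, sub_zero] at h
    exact h
  have h2b1 : ∀ b : ZMod n, ρ (2 * b - 1) = 2 * b - ρ 1 := by
    intro b
    have h := hcomm 1 b
    simp only [dOp] at h
    exact h
  have heven : ∀ a : ZMod n, Even a.val → ρ a = a - ρ 0 := by
    intro a ha
    obtain ⟨k, hk⟩ := ha
    have hak : a = 2 * ((k : ℕ) : ZMod n) := by
      conv_lhs => rw [← hself a, hk]
      push_cast; ring
    rw [hak, h2b]
  have hodd : ∀ a : ZMod n, ¬ Even a.val → ρ a = a + 1 - ρ 1 := by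
    intro a ha
    rw [Nat.not_even_iff_odd] at ha
    obtain ⟨k, hk⟩ := ha
    have hak : a = 2 * (((k : ℕ) : ZMod n) + 1) - 1 := by
      conv_lhs => rw [← hself a, hk]
      push_cast; ring
    rw [hak, h2b1]
    ring_nf
  rcases hρval 0 with h0 | h0 <;> rcases hρval 1 with h1 | h1
  · left
    funext a
    by_cases ha : Even a.val
    · rw [heven a ha, h0]; simp
    · rw [hodd a ha, h1]; simp
  · right; right; right
    funext a
    simp only [halfAntipodal', ← hm]
    by_cases ha : Even a.val
    · rw [if_pos ha, heven a ha, h0]; simp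
    · rw [if_neg ha, hodd a ha, h1]; linear_combination -hm2
  · right; right; left
    funext a
    simp only [halfAntipodal, ← hm]
    by_cases ha : Even a.val
    · rw [if_pos ha, heven a ha, h0]; linear_combination -hm2
    · rw [if_neg ha, hodd a ha, h1]; simp
  · right; left
    funext a
    simp only [antipodal, ← hm]
    by_cases ha : Even a.val
    · rw [heven a ha, h0]; linear_combination -hm2
    · rw [hodd a ha, h1]; linear_combination -hm2
end

section
/- The double of the dihedral quandle R_{2n+1} is isomorphic, as a symmetric quandle, to the dihedral quandle R_{4n+2} equipped with the antipodal good involution a ↦ a + (2n+1). -/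
/-- A quandle: a set with a binary operation `op`, its dual operation `dual`
(so that right translations are bijections), idempotence, and self-distributivity. -/
structure Quandle' (Q : Type*) where
  op : Q → Q → Q
  dual : Q → Q → Q
  idem : ∀ a, op a a = a
  op_dual : ∀ a b, op (dual a b) b = a
  dual_op : ∀ a b, dual (op a b) b = a
  distrib : ∀ a b c, op (op a b) c = op (op a c) (op b c)

/-- The dihedral quandle `R_n` (it is a kei, so its dual operation equals `dOp`). -/
def dihedralQ (n : ℕ) : Quandle' (ZMod n) where
  op a b := dOp n a b
  dual a b := dOp n a b
  idem a := by unfold dOp; ring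
  op_dual a b := by unfold dOp; ring
  dual_op a b := by unfold dOp; ring
  distrib a b c := by unfold dOp; ring

/-- The operation of the double `D(Q) = Q ⊔ Q̄`. -/
def doubleOp {Q : Type*} (q : Quandle' Q) : Q ⊕ Q → Q ⊕ Q → Q ⊕ Q
  | .inl a, .inl b => .inl (q.op a b)
  | .inl a, .inr b => .inl (q.dual a b)
  | .inr a, .inl b => .inr (q.op a b)
  | .inr a, .inr b => .inr (q.dual a b)

def sumEquivProd (m : ℕ) : (ZMod m ⊕ ZMod m) ≃ ZMod 2 × ZMod m where
  toFun := Sum.elim (fun a => (0, a)) (fun a => (1, a))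
  invFun p := if p.1 = 0 then .inl p.2 else .inr p.2
  left_inv := by rintro (a | a) <;> simp
  right_inv := by
    rintro ⟨x, a⟩
    fin_cases x <;> simp <;> rfl

/-- The double of `R_{2n+1}` is isomorphic, as a symmetric quandle, to
`R_{4n+2}` with the antipodal good involution `a ↦ a + (2n+1)`. -/
theorem stmt11 (n : ℕ) :
    ∃ f : (ZMod (2 * n + 1) ⊕ ZMod (2 * n + 1)) ≃ ZMod (4 * n + 2),
      (∀ x y, f (doubleOp (dihedralQ (2 * n + 1)) x y) = dOp (4 * n + 2) (f x) (f y)) ∧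
      (∀ x, f (Sum.swap x) = f x + ((2 * n + 1 : ℕ) : ZMod (4 * n + 2))) := by
  
  have hco : Nat.Coprime 2 (2 * n + 1) := by
    rw [Nat.coprime_two_left]; exact ⟨n, by ring⟩
  rw [show 4 * n + 2 = 2 * (2 * n + 1) from by ring]
  set m := 2 * n + 1 with hm
  have e := ZMod.chineseRemainder hco
  set ψ := e.symm with hψ
  refine ⟨(sumEquivProd m).trans ψ.toEquiv, ?_, ?_⟩
  · have key : ∀ p q : ZMod 2 × ZMod m, ψ (2 * q - p) = dOp (2 * m) (ψ p) (ψ q) := by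
      intro p q
      simp [dOp, map_sub, map_mul, map_ofNat]
    rintro (a | a) (b | b) <;>
      simp only [Equiv.trans_apply, sumEquivProd, Equiv.coe_fn_mk, Sum.elim_inl, Sum.elim_inr,
        doubleOp, dihedralQ, RingEquiv.toEquiv_eq_coe, EquivLike.coe_coe] <;>
      rw [← key] <;> congr 1 <;>
      · refine Prod.ext ?_ ?_ <;> simp [dOp] <;> decide
  · have hψ10 : ψ (1, 0) = ((m : ℕ) : ZMod (2 * m)) := by
      rw [hψ, show ((1 : ZMod 2), (0 : ZMod m)) = e ((m : ℕ) : ZMod (2*m)) from ?_,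
        e.symm_apply_apply]
      rw [map_natCast]
      refine Prod.ext ?_ ?_
      · show (1 : ZMod 2) = ((m : ℕ) : ZMod 2)
        rw [hm]
        push_cast
        rw [show (2 : ZMod 2) = 0 from by decide]
        ring
      · show (0 : ZMod m) = ((m : ℕ) : ZMod m)
        exact (ZMod.natCast_self m).symm
    rintro (a | a) <;>
      simp only [Sum.swap, Equiv.trans_apply, sumEquivProd, Equiv.coe_fn_mk, Sum.elim_inl,
        Sum.elim_inr, RingEquiv.toEquiv_eq_coe, EquivLike.coe_coe] <;>
      [skip; skip]
    · have : ((1 : ZMod 2), a) = (0, a) + (1, 0) := by simp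
      rw [this, map_add, hψ10]
    · have : ((0 : ZMod 2), a) = (1, a) + (1, 0) := by
        refine Prod.ext ?_ ?_ <;> simp <;> decide
      rw [this, map_add, hψ10]
end

section
/- If ρ is a good involution of a connected quandle Q and ρ fixes some element x ∈ Q, then ρ is the identity map on Q. -/
/-- The right translation `S_b : a ↦ a * b`, a bijection of `Q`. -/
def rightTr {Q : Type*} (q : Quandle' Q) (b : Q) : Equiv.Perm Q where
  toFun a := q.op a b
  invFun a := q.dual a b
  left_inv a := q.dual_op a b
  right_inv a := q.op_dual a b

/-- The inner automorphism group of a quandle: the subgroup of permutations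
generated by the right translations. -/
def Inn {Q : Type*} (q : Quandle' Q) : Subgroup (Equiv.Perm Q) :=
  Subgroup.closure (Set.range (rightTr q))

theorem Quandle'.commute_of_mem_inn {Q : Type*} (q : Quandle' Q) {ρ : Q → Q}
    (hρ : ∀ a b, ρ (q.op a b) = q.op (ρ a) b) {g : Equiv.Perm Q} (hg : g ∈ Inn q) :
    Function.Commute ρ g := by
  induction hg using Subgroup.closure_induction with
  | mem _ hmem =>
    obtain ⟨b, rfl⟩ := hmem
    exact fun a => hρ a b
  | one => exact fun _ => rfl
  | mul g h _ _ hg hh => exact hg.comp_right hh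
  | inv g _ hg => exact hg.inverses_right g.right_inv g.left_inv

theorem Quandle'.eq_id_of_map_op_of_isFixedPt {Q : Type*} (q : Quandle' Q)
    (hconn : ∀ a b : Q, ∃ g ∈ Inn q, g a = b) {ρ : Q → Q}
    (hρ : ∀ a b, ρ (q.op a b) = q.op (ρ a) b) {x : Q} (hx : Function.IsFixedPt ρ x) :
    ρ = id := by
  funext b
  obtain ⟨g, hg, rfl⟩ := hconn x b
  rw [q.commute_of_mem_inn hρ hg x, hx, id]

/-- If a good involution of a connected quandle fixes some element,
then it is the identity. -/
theorem stmt12 {Q : Type*} (q : Quandle' Q)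
    (hconn : ∀ a b : Q, ∃ g ∈ Inn q, g a = b)
    (ρ : Q → Q) (hρ : IsGoodInvolution q.op ρ)
    (x : Q) (hx : ρ x = x) : ρ = id :=
  q.eq_id_of_map_op_of_isFixedPt hconn hρ.2.1 hx
end
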